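/- arXiv:2311.09701 — 2 statements merged into one kernel-verified Lean document; each statement's English description precedes it below -/
import Mathlib

section
/- Let Ω ⊂ ℝⁿ be bounded open, 1 < p ≤ n, q ∈ (n/p, ∞], and μ a nonnegative measure on Ω with finite Morrey norm ‖μ‖_{M^q(Ω)}. Then ∫_Ω W_{1,p}^{2 diam(Ω)} μ(x) dμ(x) ≤ C ‖μ‖_{M^q(Ω)}^{p/(p−1)} diam(Ω)^{n + (1 − n/q)·p/(p−1)}, where W_{1,p}^R μ(x) = ∫_0^R (μ(B(x,t))/t^{n−p})^{1/(p−1)} dt/t and C depends only on n, p, q. -/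
open MeasureTheory Metric Set
open scoped ENNReal NNReal

/-!
The Morrey bound `μ(B(x,t)) ≤ M t^a` turns the integrand of the Wolff potential into
`M^{1/(p-1)} t^{β-1}` with `β = (a - (n - p))/(p - 1) > 0`, so the potential is bounded uniformly
in `x` by `M^{1/(p-1)} R^β / β`. Integrating this constant against `μ` costs the total mass
`μ(Ω) ≤ M (2 diam Ω)^a`, again by the Morrey bound.
-/

noncomputable def wolffPotential {X : Type*} [PseudoMetricSpace X] [MeasurableSpace X]
    (μ : Measure X) (d p R : ℝ) (x : X) : ℝ≥0∞ :=
  ∫⁻ t in Ioc 0 R, (μ (ball x t) / ENNReal.ofReal (t ^ (d - p))) ^ (1 / (p - 1))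
    * ENNReal.ofReal t⁻¹

lemma div_toReal_lt_of_ofReal_div_lt {n p : ℝ} {q : ℝ≥0∞} (hn : 0 ≤ n) (hp : 0 < p)
    (hq : ENNReal.ofReal (n / p) < q) : n / q.toReal < p := by
  rcases eq_or_ne q ⊤ with rfl | hq_top
  · simpa using hp
  have hnq : n / p < q.toReal := (ENNReal.ofReal_lt_iff_lt_toReal (by positivity) hq_top).1 hq
  have hq_pos : 0 < q.toReal := (div_nonneg hn hp.le).trans_lt hnq
  rw [div_lt_iff₀ hq_pos]
  rw [div_lt_iff₀ hp] at hnq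
  linarith

lemma div_ofReal_rpow_rpow_mul_inv_le {m : ℝ≥0∞} {M a s r t : ℝ} (hM : 0 ≤ M) (hr : 0 < r)
    (ht : 0 < t) (hm : m ≤ ENNReal.ofReal (M * t ^ a)) :
    (m / ENNReal.ofReal (t ^ s)) ^ (1 / r) * ENNReal.ofReal t⁻¹
      ≤ ENNReal.ofReal (M ^ (1 / r)) * ENNReal.ofReal (t ^ ((a - s) / r - 1)) := by
  calc (m / ENNReal.ofReal (t ^ s)) ^ (1 / r) * ENNReal.ofReal t⁻¹
      ≤ (ENNReal.ofReal (M * t ^ a) / ENNReal.ofReal (t ^ s)) ^ (1 / r)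
          * ENNReal.ofReal t⁻¹ := by
        gcongr
    _ = ENNReal.ofReal ((M * t ^ a / t ^ s) ^ (1 / r) * t⁻¹) := by
        rw [← ENNReal.ofReal_div_of_pos (by positivity),
          ENNReal.ofReal_rpow_of_nonneg (by positivity) (by positivity),
          ← ENNReal.ofReal_mul (by positivity)]
    _ = ENNReal.ofReal (M ^ (1 / r)) * ENNReal.ofReal (t ^ ((a - s) / r - 1)) := by
        rw [← ENNReal.ofReal_mul (by positivity), mul_div_assoc, ← Real.rpow_sub ht,
          Real.mul_rpow hM (by positivity), ← Real.rpow_mul ht.le, mul_one_div,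
          Real.rpow_sub_one ht.ne', ← div_eq_mul_inv, mul_div_assoc]

lemma lintegral_Ioc_ofReal_rpow_sub_one {β R : ℝ} (hβ : 0 < β) (hR : 0 ≤ R) :
    ∫⁻ t in Ioc 0 R, ENNReal.ofReal (t ^ (β - 1)) = ENNReal.ofReal (R ^ β / β) := by
  have hint : IntegrableOn (fun t : ℝ ↦ t ^ (β - 1)) (Ioc 0 R) := by
    rw [← intervalIntegrable_iff_integrableOn_Ioc_of_le hR]
    exact intervalIntegral.intervalIntegrable_rpow' (by linarith)
  rw [← ofReal_integral_eq_lintegral_ofReal hint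
      ((ae_restrict_mem measurableSet_Ioc).mono fun t ht ↦ Real.rpow_nonneg ht.1.le _),
    ← intervalIntegral.integral_of_le hR, integral_rpow (Or.inl (by linarith)),
    sub_add_cancel, Real.zero_rpow hβ.ne', sub_zero]

section Wolff

variable {X : Type*} [PseudoMetricSpace X] [MeasurableSpace X] {μ : Measure X} {d p a M : ℝ}

theorem wolffPotential_le_of_measure_ball_le {R : ℝ} {x : X} (hp : 1 < p) (ha : d - p < a)
    (hM : 0 ≤ M) (hR : 0 ≤ R)
    (hball : ∀ t, 0 < t → μ (ball x t) ≤ ENNReal.ofReal (M * t ^ a)) :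
    wolffPotential μ d p R x
      ≤ ENNReal.ofReal (M ^ (1 / (p - 1)) * (R ^ ((a - (d - p)) / (p - 1))
          / ((a - (d - p)) / (p - 1)))) := by
  have hβ : 0 < (a - (d - p)) / (p - 1) := div_pos (by linarith) (by linarith)
  calc wolffPotential μ d p R x
      ≤ ∫⁻ t in Ioc 0 R, ENNReal.ofReal (M ^ (1 / (p - 1)))
          * ENNReal.ofReal (t ^ ((a - (d - p)) / (p - 1) - 1)) := by
        exact setLIntegral_mono (by fun_prop) fun t ht ↦
          div_ofReal_rpow_rpow_mul_inv_le hM (by linarith) ht.1 (hball t ht.1)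
    _ = _ := by
        rw [lintegral_const_mul _ (by fun_prop), lintegral_Ioc_ofReal_rpow_sub_one hβ hR,
          ← ENNReal.ofReal_mul (by positivity)]

theorem setLIntegral_wolffPotential_le {Ω : Set X} (hΩ : Bornology.IsBounded Ω)
    (hμ : μ Ωᶜ = 0) (hp : 1 < p) (ha : d - p < a) (hM : 0 ≤ M)
    (hMorrey : ∀ x r, 0 < r → μ (Ω ∩ ball x r) ≤ ENNReal.ofReal (M * r ^ a)) :
    ∫⁻ x in Ω, wolffPotential μ d p (2 * diam Ω) x ∂μ
      ≤ ENNReal.ofReal (2 ^ ((a - (d - p)) / (p - 1) + a) / ((a - (d - p)) / (p - 1))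
          * M ^ (p / (p - 1)) * diam Ω ^ ((a - (d - p)) / (p - 1) + a)) := by
  set D := diam Ω
  set β := (a - (d - p)) / (p - 1)
  have hβ : 0 < β := div_pos (by linarith) (by linarith)
  rcases (diam_nonneg (s := Ω)).eq_or_lt with hD | hD
  · simp [wolffPotential, D, ← hD]
  obtain ⟨x₀, hx₀⟩ : Ω.Nonempty := nonempty_iff_ne_empty.2 fun h ↦ by simp [h] at hD
  have hmass : μ Ω ≤ ENNReal.ofReal (M * (2 * D) ^ a) := by
    have hsub : Ω ⊆ ball x₀ (2 * D) := fun y hy ↦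
      mem_ball.2 ((dist_le_diam_of_mem hΩ hy hx₀).trans_lt (by linarith))
    rw [← inter_eq_self_of_subset_left hsub]
    exact hMorrey x₀ _ (by positivity)
  set W := M ^ (1 / (p - 1)) * ((2 * D) ^ β / β) with hW_def
  have hW : ∀ x, wolffPotential μ d p (2 * D) x ≤ ENNReal.ofReal W :=
    fun x ↦ wolffPotential_le_of_measure_ball_le hp ha hM (by positivity) fun t ht ↦ by
      rw [← measure_inter_conull hμ, inter_comm]
      exact hMorrey x t ht
  have hMpow : M ^ (1 / (p - 1)) * M = M ^ (p / (p - 1)) := by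
    rw [← Real.rpow_add_one' hM (by positivity), div_add_one (by linarith), add_sub_cancel]
  calc ∫⁻ x in Ω, wolffPotential μ d p (2 * D) x ∂μ
      ≤ ∫⁻ _ in Ω, ENNReal.ofReal W ∂μ := lintegral_mono hW
    _ = ENNReal.ofReal W * μ Ω := setLIntegral_const _ _
    _ ≤ ENNReal.ofReal W * ENNReal.ofReal (M * (2 * D) ^ a) := by gcongr
    _ = _ := by
        rw [← ENNReal.ofReal_mul (by positivity)]
        congr 1
        rw [hW_def, ← hMpow, Real.rpow_add two_pos, Real.rpow_add hD,
          Real.mul_rpow zero_le_two hD.le, Real.mul_rpow zero_le_two hD.le]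
        ring

end Wolff

theorem wolff_energy_bound_general (n : ℕ) (p : ℝ) (hp : 1 < p)
    (q : ℝ≥0∞) (hq : ENNReal.ofReal ((n : ℝ) / p) < q) :
    ∃ C > (0 : ℝ), ∀ (Ω : Set (EuclideanSpace ℝ (Fin n))),
      IsOpen Ω → Bornology.IsBounded Ω →
      ∀ μ : Measure (EuclideanSpace ℝ (Fin n)), μ Ωᶜ = 0 →
      ∀ M : ℝ, 0 ≤ M →
      (∀ (x : EuclideanSpace ℝ (Fin n)) (r : ℝ), 0 < r →
        μ (Ω ∩ ball x r) ≤ ENNReal.ofReal (M * r ^ ((n : ℝ) * (1 - 1 / q.toReal)))) →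
      ∫⁻ x in Ω,
          (∫⁻ t in Ioc (0 : ℝ) (2 * diam Ω),
            (μ (ball x t) / ENNReal.ofReal (t ^ ((n : ℝ) - p))) ^ (1 / (p - 1))
              * ENNReal.ofReal t⁻¹) ∂μ
        ≤ ENNReal.ofReal
            (C * M ^ (p / (p - 1))
              * diam Ω ^ ((n : ℝ) + (1 - (n : ℝ) / q.toReal) * p / (p - 1))) := by
  have hnq : (n : ℝ) / q.toReal < p :=
    div_toReal_lt_of_ofReal_div_lt (by positivity) (by linarith) hq
  set a := (n : ℝ) * (1 - 1 / q.toReal)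
  have ha : a = n - n / q.toReal := by ring
  set β := (a - (n - p)) / (p - 1)
  have hβ : 0 < β := div_pos (by linarith) (by linarith)
  have hE : β + a = (n : ℝ) + (1 - (n : ℝ) / q.toReal) * p / (p - 1) := by
    rw [ha, div_add' _ _ _ (by linarith), add_div' _ _ _ (by linarith)]
    ring
  refine ⟨2 ^ (β + a) / β, by positivity, fun Ω _ hΩ μ hμ M hM hMorrey ↦ ?_⟩
  rw [← hE]
  exact setLIntegral_wolffPotential_le hΩ hμ hp (by linarith) hM hMorrey

/-- **Wolff energy bound for a Morrey measure.**
Let `Ω ⊂ ℝⁿ` be bounded open, `1 < p ≤ n`, `q ∈ (n/p, ∞]`, and `μ` a nonnegative measure on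
`Ω` with Morrey bound `μ(Ω ∩ B(x,r)) ≤ M r^{n/q'}` (`n/q' = n(1−1/q)`).  Then
`∫_Ω W_{1,p}^{2 diam Ω} μ dμ ≤ C M^{p/(p−1)} (diam Ω)^{n + (1 − n/q)p/(p−1)}`, where
`W_{1,p}^R μ(x) = ∫_0^R (μ(B(x,t))/t^{n−p})^{1/(p−1)} dt/t` and `C = C(n,p,q)`. -/
theorem wolff_energy_bound (n : ℕ) (p : ℝ) (hp : 1 < p) (hpn : p ≤ (n : ℝ))
    (q : ℝ≥0∞) (hq : ENNReal.ofReal ((n : ℝ) / p) < q) :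
    ∃ C > (0 : ℝ), ∀ (Ω : Set (EuclideanSpace ℝ (Fin n))),
      IsOpen Ω → Bornology.IsBounded Ω →
      ∀ μ : Measure (EuclideanSpace ℝ (Fin n)), μ Ωᶜ = 0 →
      ∀ M : ℝ, 0 ≤ M →
      (∀ (x : EuclideanSpace ℝ (Fin n)) (r : ℝ), 0 < r →
        μ (Ω ∩ ball x r) ≤ ENNReal.ofReal (M * r ^ ((n : ℝ) * (1 - 1 / q.toReal)))) →
      ∫⁻ x in Ω,
          (∫⁻ t in Ioc (0 : ℝ) (2 * diam Ω),
            (μ (ball x t) / ENNReal.ofReal (t ^ ((n : ℝ) - p))) ^ (1 / (p - 1))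
              * ENNReal.ofReal t⁻¹) ∂μ
        ≤ ENNReal.ofReal
            (C * M ^ (p / (p - 1))
              * diam Ω ^ ((n : ℝ) + (1 - (n : ℝ) / q.toReal) * p / (p - 1))) :=
  wolff_energy_bound_general n p hp q hq
end

section
/- Let Ω ⊂ ℝⁿ be bounded open, Γ ⊂ ∂Ω closed and nonempty, 1 < p ≤ n, q ∈ (n/p, ∞]. Suppose ν is a nonnegative measure with floated Morrey norm ‖ν‖_{M^q_Γ(Ω)} finite. For k ∈ ℤ let ν_k := 1_{Ω∖Γ_{k+2}} ν, where Γ_j := {x ∈ Ω : δ_Γ(x) ≤ θ^j} for a fixed 0 < θ < 1. Then for any ball B = B(ξ, θ^k) with ξ ∈ Γ, the (unfloated) Morrey norm of ν_k on Ω ∩ B is controlled: ‖ν_k‖_{M^q(Ω∩B)} ≤ N ‖ν‖_{M^q_Γ(Ω)}, where N depends only on n and θ. -/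
open MeasureTheory Metric Set
open scoped ENNReal NNReal

/-- **Localization of the floated Morrey condition.**  Let `Γ ⊆ ∂Ω` be closed and nonempty,
`0 < θ < 1`, and let `ν ≥ 0` satisfy the floated Morrey bound
`ν(Ω ∩ B(x,r)) ≤ M r^{n/q'}` for `x ∈ Ω`, `0 < r < δ_Γ(x)/2`.  For `k ∈ ℤ` set
`ν_k := 1_{Ω ∖ Γ_{k+2}} ν` with `Γ_j = {x ∈ Ω : δ_Γ(x) ≤ θ^j}`.  Then for every ball
`B = B(ξ, θ^k)` with `ξ ∈ Γ`, the unfloated Morrey norm of `ν_k` on `Ω ∩ B` satisfies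
`ν_k((Ω ∩ B) ∩ B(x,r)) ≤ N M r^{n/q'}`, with `N` depending only on `n` and `θ`. -/
theorem localized_morrey_bound (n : ℕ) (θ : ℝ) (hθ0 : 0 < θ) (hθ1 : θ < 1) :
    ∃ N > (0 : ℝ), ∀ (Ω Γ : Set (EuclideanSpace ℝ (Fin n))),
      IsOpen Ω → Bornology.IsBounded Ω →
      IsClosed Γ → Γ ⊆ frontier Ω → Γ.Nonempty →
      ∀ q : ℝ≥0∞, 1 ≤ q →
      ∀ ν : Measure (EuclideanSpace ℝ (Fin n)), ν Ωᶜ = 0 →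
      ∀ M : ℝ, 0 ≤ M →
      (∀ x ∈ Ω, ∀ r : ℝ, 0 < r → r < infDist x Γ / 2 →
        ν (Ω ∩ ball x r) ≤ ENNReal.ofReal (M * r ^ ((n : ℝ) * (1 - 1 / q.toReal)))) →
      ∀ k : ℤ, ∀ ξ ∈ Γ, ∀ x ∈ Ω ∩ ball ξ (θ ^ k), ∀ r : ℝ, 0 < r →
        (ν.restrict {y ∈ Ω | θ ^ (k + 2) < infDist y Γ})
            ((Ω ∩ ball ξ (θ ^ k)) ∩ ball x r)
          ≤ ENNReal.ofReal (N * M * r ^ ((n : ℝ) * (1 - 1 / q.toReal))) := by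
  classical
  have hε : (0:ℝ) < θ^2/8 := by positivity
  obtain ⟨t, ht⟩ : ∃ t : Finset (EuclideanSpace ℝ (Fin n)),
      closedBall (0:EuclideanSpace ℝ (Fin n)) 1 ⊆ ⋃ i ∈ t, ball i (θ^2/8) := by
    refine (isCompact_closedBall (0:EuclideanSpace ℝ (Fin n)) 1).elim_finite_subcover
      (fun i : EuclideanSpace ℝ (Fin n) => ball i (θ^2/8)) (fun i => isOpen_ball) ?_
    intro z _
    exact mem_iUnion.2 ⟨z, mem_ball_self hε⟩
  refine ⟨(t.card : ℝ) + 2^n, by positivity, ?_⟩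
  intro Ω Γ hΩo hΩb hΓc hΓf hΓne q hq ν hν M hM hMor k ξ hξ x hx r hr
  set α : ℝ := (n:ℝ) * (1 - 1/q.toReal) with hαdef
  have hq1 : 1/q.toReal ≤ 1 := by
    rcases eq_or_ne q ∞ with h|h
    · simp [h]
    · have h1 : (1:ℝ) ≤ q.toReal := by
        rw [← ENNReal.toReal_one]
        exact ENNReal.toReal_mono h hq
      rw [div_le_one (by linarith)]
      exact h1
  have hq0 : 0 ≤ 1/q.toReal := by positivity
  have hα0 : 0 ≤ α := by
    have : (0:ℝ) ≤ (n:ℝ) := Nat.cast_nonneg n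
    have h2 : 0 ≤ 1 - 1/q.toReal := by linarith
    exact mul_nonneg this h2
  have hαn : α ≤ (n:ℝ) := by
    have hn : (0:ℝ) ≤ (n:ℝ) := Nat.cast_nonneg n
    nlinarith
  -- the floated set
  set S : Set (EuclideanSpace ℝ (Fin n)) := {y ∈ Ω | θ ^ (k + 2) < infDist y Γ} with hSdef
  have hSopen : IsOpen S := by
    have : S = Ω ∩ {y | θ ^ (k+2) < infDist y Γ} := by
      ext z; simp [hSdef, Set.mem_setOf_eq, Set.mem_sep_iff]
    rw [this]
    exact hΩo.inter (isOpen_lt continuous_const (continuous_infDist_pt Γ))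
  have hθk : (0:ℝ) < θ ^ k := zpow_pos hθ0 k
  have hθk2 : θ ^ (k+2) = θ ^ k * θ ^ 2 := by
    rw [zpow_add₀ hθ0.ne']
    norm_num [zpow_ofNat]
  have hθk2pos : (0:ℝ) < θ ^ (k+2) := zpow_pos hθ0 (k+2)
  have hrestrict : (ν.restrict S) ((Ω ∩ ball ξ (θ ^ k)) ∩ ball x r)
      = ν (((Ω ∩ ball ξ (θ ^ k)) ∩ ball x r) ∩ S) :=
    Measure.restrict_apply' hSopen.measurableSet
  -- key application of the floated Morrey bound
  have key : ∀ y ∈ S, ∀ s : ℝ, 0 < s → s ≤ θ^(k+2)/2 →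
      ν (Ω ∩ ball y s) ≤ ENNReal.ofReal (M * s ^ α) := by
    intro y hy s hs0 hs
    refine hMor y hy.1 s hs0 ?_
    have h2 : θ^(k+2) < infDist y Γ := hy.2
    linarith
  rcases lt_or_ge r (θ^(k+2)/4) with hcase | hcase
  · -- small radius case
    rw [hrestrict]
    rcases Set.eq_empty_or_nonempty (((Ω ∩ ball ξ (θ ^ k)) ∩ ball x r) ∩ S) with hA | ⟨y, hy⟩
    · rw [hA]
      simp
    · have hsub : ((Ω ∩ ball ξ (θ ^ k)) ∩ ball x r) ∩ S ⊆ Ω ∩ ball y (2*r) := by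
        rintro z ⟨⟨⟨hzΩ, _⟩, hzx⟩, _⟩
        refine ⟨hzΩ, ?_⟩
        have hyx : dist y x < r := hy.1.2
        have hzx' : dist z x < r := hzx
        rw [mem_ball]
        calc dist z y ≤ dist z x + dist x y := dist_triangle z x y
          _ = dist z x + dist y x := by rw [dist_comm x y]
          _ < 2*r := by linarith
      have h1 := key y hy.2 (2*r) (by linarith) (by linarith)
      refine le_trans (le_trans (measure_mono hsub) h1) (ENNReal.ofReal_le_ofReal ?_)
      have h2r : (2*r) ^ α = 2 ^ α * r ^ α := Real.mul_rpow (by norm_num) hr.le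
      have h2n : (2:ℝ) ^ α ≤ 2 ^ (n:ℝ) := Real.rpow_le_rpow_of_exponent_le one_le_two hαn
      have h2n' : (2:ℝ) ^ (n:ℝ) = 2 ^ n := Real.rpow_natCast 2 n
      have hrα : (0:ℝ) ≤ r ^ α := Real.rpow_nonneg hr.le α
      have hc : (0:ℝ) ≤ (t.card : ℝ) := Nat.cast_nonneg _
      rw [h2r]
      nlinarith [mul_nonneg (mul_nonneg hc hM) hrα, mul_nonneg hM hrα,
        mul_le_mul_of_nonneg_right (mul_le_mul_of_nonneg_left (h2n.trans_eq h2n') hM) hrα]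
  · -- large radius case: covering argument
    rw [hrestrict]
    set ρ : ℝ := θ^k * (θ^2/8) with hρdef
    have hρ0 : 0 < ρ := mul_pos hθk hε
    have h2ρ : 2*ρ = θ^(k+2)/4 := by rw [hθk2, hρdef]; ring
    have hcover : ((Ω ∩ ball ξ (θ ^ k)) ∩ ball x r) ∩ S ⊆
        ⋃ i ∈ t, (((Ω ∩ ball ξ (θ ^ k)) ∩ ball x r) ∩ S) ∩ ball (ξ + (θ^k) • i) ρ := by
      rintro z hz
      have hzd : dist z ξ < θ^k := hz.1.1.2
      have hw : (θ^k)⁻¹ • (z - ξ) ∈ closedBall (0:EuclideanSpace ℝ (Fin n)) 1 := by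
        rw [mem_closedBall, dist_zero_right, norm_smul, Real.norm_eq_abs,
          abs_of_pos (inv_pos.2 hθk)]
        rw [← dist_eq_norm] at *
        rw [inv_mul_le_iff₀ hθk, mul_one]
        exact hzd.le
      obtain ⟨i, hi, hdi⟩ := mem_iUnion₂.1 (ht hw)
      refine mem_iUnion₂.2 ⟨i, hi, hz, ?_⟩
      rw [mem_ball] at hdi ⊢
      have hdist : dist z (ξ + (θ^k) • i) = θ^k * dist ((θ^k)⁻¹ • (z - ξ)) i := by
        rw [dist_eq_norm, dist_eq_norm, ← norm_smul_of_nonneg hθk.le, smul_sub,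
          smul_smul, mul_inv_cancel₀ hθk.ne', one_smul]
        congr 1
        abel
      rw [hdist]
      calc θ^k * dist ((θ^k)⁻¹ • (z - ξ)) i < θ^k * (θ^2/8) :=
            (mul_lt_mul_iff_right₀ hθk).2 hdi
        _ = ρ := rfl
    calc ν (((Ω ∩ ball ξ (θ ^ k)) ∩ ball x r) ∩ S)
        ≤ ∑ i ∈ t, ν ((((Ω ∩ ball ξ (θ ^ k)) ∩ ball x r) ∩ S) ∩ ball (ξ + (θ^k) • i) ρ) :=
          le_trans (measure_mono hcover) (measure_biUnion_finset_le (μ := ν) t _)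
      _ ≤ ∑ i ∈ t, ENNReal.ofReal (M * r ^ α) := by
          refine Finset.sum_le_sum fun i _ => ?_
          rcases Set.eq_empty_or_nonempty
              ((((Ω ∩ ball ξ (θ ^ k)) ∩ ball x r) ∩ S) ∩ ball (ξ + (θ^k) • i) ρ)
            with hA | ⟨y, hy⟩
          · rw [hA]; simp
          · have hyS : y ∈ S := hy.1.2
            have hyB : dist y (ξ + (θ^k) • i) < ρ := hy.2
            have hsub : (((Ω ∩ ball ξ (θ ^ k)) ∩ ball x r) ∩ S) ∩ ball (ξ + (θ^k) • i) ρ ⊆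
                Ω ∩ ball y (2*ρ) := by
              rintro z ⟨⟨⟨⟨hzΩ, _⟩, _⟩, _⟩, hzB⟩
              refine ⟨hzΩ, ?_⟩
              rw [mem_ball] at hzB ⊢
              calc dist z y ≤ dist z (ξ + (θ^k) • i) + dist (ξ + (θ^k) • i) y :=
                    dist_triangle _ _ _
                _ = dist z (ξ + (θ^k) • i) + dist y (ξ + (θ^k) • i) := by
                    rw [dist_comm (ξ + (θ^k) • i) y]
                _ < 2*ρ := by linarith
            have h1 := key y hyS (2*ρ) (by linarith) (by rw [h2ρ]; linarith [hθk2pos])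
            refine le_trans (le_trans (measure_mono hsub) h1) (ENNReal.ofReal_le_ofReal ?_)
            have hle : (2*ρ) ^ α ≤ r ^ α := by
              refine Real.rpow_le_rpow (by linarith) ?_ hα0
              rw [h2ρ]; exact hcase
            exact mul_le_mul_of_nonneg_left hle hM
      _ = (t.card : ℝ≥0∞) * ENNReal.ofReal (M * r ^ α) := by
          rw [Finset.sum_const, nsmul_eq_mul]
      _ ≤ ENNReal.ofReal (((t.card : ℝ) + 2^n) * M * r ^ α) := by
          rw [← ENNReal.ofReal_natCast, ← ENNReal.ofReal_mul (Nat.cast_nonneg _)]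
          refine ENNReal.ofReal_le_ofReal ?_
          have hrα : (0:ℝ) ≤ r ^ α := Real.rpow_nonneg hr.le α
          have h2n : (0:ℝ) < 2^n := by positivity
          nlinarith [mul_nonneg hM hrα]
end
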